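/- arXiv:2009.13319 — 3 statements merged into one kernel-verified Lean document; each statement's English description precedes it below -/
import Mathlib

section
/- For every positive integer c there exists an oriented graph D with dichromatic number exactly c such that D contains no induced directed triangle →C_3 and the underlying undirected graph of D contains no induced path on 4 vertices. -/
/-!
Induction on `c`, starting from the empty digraph. Given `A` with `χ⃗(A) = k`, take `k + 1`
disjoint copies of `A` and add for each copy `i` a hub `hᵢ`, dominated by copy `i` and dominating
all other copies. The hubs are independent, so they can share one new color: `k + 1` colors
suffice. In a `k`-dicoloring every copy uses all `k` colors, so two hubs `hᵢ`, `hⱼ` of the same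
color close a monochromatic cycle `a → hᵢ → b → hⱼ → a` with `a` in copy `i`, `b` in copy `j`;
by pigeonhole `k` colors do not suffice. The underlying graph is the join of the independent set
of hubs with the disjoint union of the copies, so an induced `P₄` stays inside one copy, and a
directed triangle through a hub would need an arc between two different copies.
-/

/-- A directed cycle (length at least 2, pairwise distinct vertices) in the digraph
with arc relation `A`; a digon counts as a directed cycle of length 2. -/
def HasDicycle {V : Type*} (A : V → V → Prop) : Prop :=
  ∃ (n : ℕ) (f : Fin (n + 2) → V), Function.Injective f ∧
    ∀ i : Fin (n + 2), A (f i) (f (i + 1))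

/-- `c` is a dicoloring of the digraph `A`: no color class contains a directed cycle. -/
def IsDicoloring {V : Type*} (A : V → V → Prop) {k : ℕ} (c : V → Fin k) : Prop :=
  ¬ HasDicycle (fun x y => A x y ∧ c x = c y)

/-- The dichromatic number of the digraph `A`: the least number of colors in a dicoloring. -/
noncomputable def dichromaticNumber {V : Type*} (A : V → V → Prop) : ℕ :=
  sInf {k : ℕ | ∃ c : V → Fin k, IsDicoloring A c}

/-- The digraph `B` appears as an induced subdigraph of the digraph `A`. -/
def HasInducedCopy {V W : Type*} (A : V → V → Prop) (B : W → W → Prop) : Prop :=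
  ∃ f : W → V, Function.Injective f ∧ ∀ x y, B x y ↔ A (f x) (f y)

/-- An oriented graph: at most one arc between any pair of vertices
(in particular no loops and no digons). -/
def IsOrientedGraph {V : Type*} (A : V → V → Prop) : Prop :=
  ∀ x y, A x y → ¬ A y x

/-- The complete symmetric digraph `↔K_k` (all digons present). -/
def symK (k : ℕ) : Fin k → Fin k → Prop := fun x y => x ≠ y

/-- The arcless digraph `K̄_k`. -/
def emptyK (k : ℕ) : Fin k → Fin k → Prop := fun _ _ => False

/-- The transitive tournament `TT_t` (note `TT_2 = →K_2`). -/
def transTour (t : ℕ) : Fin t → Fin t → Prop := fun x y => x < y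

/-- The directed triangle `→C_3`. -/
def dirC3 : Fin 3 → Fin 3 → Prop := fun x y => (y : ℕ) = ((x : ℕ) + 1) % 3

/-- The directed path `P^+(k)`: `k` arcs all oriented in the same direction, on `k+1` vertices. -/
def dirPath (k : ℕ) : Fin (k + 1) → Fin (k + 1) → Prop := fun x y => (x : ℕ) + 1 = (y : ℕ)

/-- `→K_2 + K_1`: a single arc together with an isolated vertex. -/
def K2plusK1 : Fin 3 → Fin 3 → Prop := fun x y => x = 0 ∧ y = 1

/-- `S_2^+`: the oriented star with two arcs leaving the center. -/
def S2plus : Fin 3 → Fin 3 → Prop := fun x y => x = 0 ∧ (y = 1 ∨ y = 2)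

/-- `S_2^-`: the oriented star with two arcs entering the center. -/
def S2minus : Fin 3 → Fin 3 → Prop := fun x y => (x = 1 ∨ x = 2) ∧ y = 0

/-- The oriented graph `R` on vertices `a,…,g = 0,…,6` with arcs
`a→b, b→c, c→a, b→d, d→a, c→e, e→b, f→d, d→g, g→f, f→e, e→g`. -/
def Rdigraph : Fin 7 → Fin 7 → Prop := fun x y =>
  (x = 0 ∧ y = 1) ∨ (x = 1 ∧ y = 2) ∨ (x = 2 ∧ y = 0) ∨ (x = 1 ∧ y = 3) ∨ (x = 3 ∧ y = 0) ∨
  (x = 2 ∧ y = 4) ∨ (x = 4 ∧ y = 1) ∨ (x = 5 ∧ y = 3) ∨ (x = 3 ∧ y = 6) ∨ (x = 6 ∧ y = 5) ∨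
  (x = 5 ∧ y = 4) ∨ (x = 4 ∧ y = 6)

/-- The adjacency pattern of the (undirected) path on `4` vertices. -/
def pathGraph4 : Fin 4 → Fin 4 → Prop := fun x y =>
  (x : ℕ) + 1 = (y : ℕ) ∨ (y : ℕ) + 1 = (x : ℕ)

/-- The underlying undirected graph of `A` contains the pattern `P` as an induced subgraph. -/
def HasInducedUCopy {V W : Type*} (A : V → V → Prop) (P : W → W → Prop) : Prop :=
  ∃ f : W → V, Function.Injective f ∧ ∀ x y, P x y ↔ (A (f x) (f y) ∨ A (f y) (f x))

/-- The underlying undirected graph of `A` is triangle-free. -/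
def UTriangleFree {V : Type*} (A : V → V → Prop) : Prop :=
  ¬ ∃ x y z : V, (A x y ∨ A y x) ∧ (A y z ∨ A z y) ∧ (A x z ∨ A z x)

/-- The underlying undirected graph of `A` contains no `K_4`. -/
def UK4Free {V : Type*} (A : V → V → Prop) : Prop :=
  ¬ ∃ a b c d : V, (A a b ∨ A b a) ∧ (A a c ∨ A c a) ∧ (A a d ∨ A d a) ∧
    (A b c ∨ A c b) ∧ (A b d ∨ A d b) ∧ (A c d ∨ A d c)

/-- The underlying undirected (simple) graph of the digraph `A`. -/
def underlyingGraph {V : Type*} (A : V → V → Prop) : SimpleGraph V where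
  Adj x y := x ≠ y ∧ (A x y ∨ A y x)
  symm := ⟨fun x y h => ⟨Ne.symm h.1, h.2.symm⟩⟩
  loopless := ⟨fun _ h => h.1 rfl⟩

open Function

section Dicycles

variable {V W : Type*} {A : V → V → Prop} {B : W → W → Prop}

theorem Fin.apply_eq_apply_zero_of_add_one {n : ℕ} {α : Type*} {F : Fin (n + 1) → α}
    (h : ∀ i, F (i + 1) = F i) (i : Fin (n + 1)) : F i = F 0 := by
  induction i using Fin.induction with
  | zero => rfl
  | succ i ih => rw [← Fin.coeSucc_eq_succ, h, ih]

theorem HasDicycle.map (g : V → W) (hg : Injective g) (h : ∀ x y, A x y → B (g x) (g y)) :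
    HasDicycle A → HasDicycle B
  | ⟨n, f, hf, hA⟩ => ⟨n, g ∘ f, hg.comp hf, fun i => h _ _ (hA i)⟩

theorem HasDicycle.of_le_map (g : V → W) (hg : Injective g)
    (h : ∀ x y, B x y → ∃ a b, g a = x ∧ g b = y ∧ A a b) : HasDicycle B → HasDicycle A := by
  rintro ⟨n, f, hf, hB⟩
  choose a b ha hb hab using fun i => h _ _ (hB i)
  have hba : ∀ i, b i = a (i + 1) := fun i => hg ((hb i).trans (ha (i + 1)).symm)
  refine ⟨n, a, fun i j hij => hf ?_, fun i => hba i ▸ hab i⟩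
  rw [← ha i, ← ha j, hij]

theorem HasDicycle.of_disjointUnion {ι : Type*} :
    HasDicycle (fun x y : ι × V => x.1 = y.1 ∧ A x.2 y.2) → HasDicycle A := by
  rintro ⟨n, f, hf, hA⟩
  have hfst : ∀ i, (f i).1 = (f 0).1 :=
    Fin.apply_eq_apply_zero_of_add_one fun i => (hA i).1.symm
  refine ⟨n, fun i => (f i).2, fun i j hij => hf (Prod.ext ((hfst i).trans (hfst j).symm) hij),
    fun i => (hA i).2⟩

theorem hasDicycle_of_four {a b c d : V} (hab : A a b) (hbc : A b c) (hcd : A c d) (hda : A d a)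
    (h : [a, b, c, d].Nodup) : HasDicycle A := by
  refine ⟨2, ![a, b, c, d], ?_, fun i => by fin_cases i <;> assumption⟩
  exact List.nodup_ofFn.mp (by simpa using h)

end Dicycles

section Dicolorings

variable {V W : Type*} {A : V → V → Prop} {k m : ℕ}

theorem IsDicoloring.of_imp {c : V → Fin k} {c' : V → Fin m} (hc : IsDicoloring A c)
    (h : ∀ x y, A x y → c' x = c' y → c x = c y) : IsDicoloring A c' := fun hcyc =>
  hc (hcyc.map id injective_id fun x y hxy => ⟨hxy.1, h x y hxy.1 hxy.2⟩)

theorem isDicoloring_of_injective {c : V → Fin k} (hc : Injective c) : IsDicoloring A c := by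
  rintro ⟨n, f, hf, hA⟩
  exact zero_ne_one (hf (hc (hA 0).2))

theorem IsDicoloring.onFun {c : V → Fin k} (hc : IsDicoloring A c) {g : W → V}
    (hg : Injective g) : IsDicoloring (A on g) (c ∘ g) := fun hcyc =>
  hc (hcyc.map g hg fun _ _ hxy => hxy)

theorem dichromaticNumber_le {c : V → Fin k} (hc : IsDicoloring A c) :
    dichromaticNumber A ≤ k :=
  Nat.sInf_le (show k ∈ {k | ∃ c : V → Fin k, IsDicoloring A c} from ⟨c, hc⟩)

theorem exists_isDicoloring_dichromaticNumber [Finite V] (A : V → V → Prop) :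
    ∃ c : V → Fin (dichromaticNumber A), IsDicoloring A c := by
  obtain ⟨n, ⟨e⟩⟩ := Finite.exists_equiv_fin V
  exact Nat.sInf_mem (s := {k | ∃ c : V → Fin k, IsDicoloring A c})
    ⟨n, e, isDicoloring_of_injective e.injective⟩

theorem lt_dichromaticNumber [Finite V] (h : ∀ c : V → Fin k, ¬ IsDicoloring A c) :
    k < dichromaticNumber A := by
  by_contra! hle
  obtain ⟨c, hc⟩ := exists_isDicoloring_dichromaticNumber A
  exact h (Fin.castLE hle ∘ c) (hc.of_imp fun _ _ _ h => Fin.castLE_injective hle h)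

theorem dichromaticNumber_of_isEmpty [IsEmpty V] (A : V → V → Prop) :
    dichromaticNumber A = 0 :=
  Nat.eq_zero_of_le_zero <| dichromaticNumber_le <|
    isDicoloring_of_injective (c := isEmptyElim) (injective_of_subsingleton _)

theorem dichromaticNumber_onFun_equiv (e : W ≃ V) (A : V → V → Prop) :
    dichromaticNumber (A on e) = dichromaticNumber A := by
  refine congrArg sInf (Set.ext fun k => ⟨fun ⟨c, hc⟩ => ⟨c ∘ e.symm, ?_⟩,
    fun ⟨c, hc⟩ => ⟨c ∘ e, hc.onFun e.injective⟩⟩)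
  have hA : (A on e on e.symm) = A := by
    funext x y
    simp only [onFun, Equiv.apply_symm_apply]
  exact hA ▸ hc.onFun e.symm.injective

theorem IsDicoloring.surjective {c : V → Fin k} (hc : IsDicoloring A c)
    (hA : dichromaticNumber A = k) : Surjective c := by
  intro y
  by_contra! hy
  cases k with
  | zero => exact y.elim0
  | succ k =>
    choose c' hc' using fun v => Fin.exists_succAbove_eq (hy v)
    have : IsDicoloring A c' := hc.of_imp fun x z _ hxz => by rw [← hc' x, ← hc' z, hxz]
    have := dichromaticNumber_le this
    omega

end Dicolorings

instance : DecidableRel pathGraph4 := fun _ _ => inferInstanceAs (Decidable (_ ∨ _))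

section InducedCopies

variable {V W X : Type*} {A : V → V → Prop} {B : X → X → Prop} {g : W → V}

theorem IsOrientedGraph.onFun (hA : IsOrientedGraph A) (g : W → V) :
    IsOrientedGraph (A on g) :=
  fun x y => hA (g x) (g y)

theorem HasInducedCopy.of_onFun (hg : Injective g) : HasInducedCopy (A on g) B → HasInducedCopy A B
  | ⟨f, hf, hB⟩ => ⟨g ∘ f, hg.comp hf, hB⟩

theorem HasInducedUCopy.of_onFun (hg : Injective g) :
    HasInducedUCopy (A on g) B → HasInducedUCopy A B :=
  HasInducedCopy.of_onFun (A := fun x y => A x y ∨ A y x) hg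

theorem HasInducedCopy.of_comp {R : W → W → Prop} {φ : V → W} (hφ : ∀ a b, R (φ a) (φ b) ↔ A a b)
    {g : X → V} (hg : Injective (φ ∘ g)) (hB : ∀ x y, B x y ↔ R (φ (g x)) (φ (g y))) :
    HasInducedCopy A B :=
  ⟨g, hg.of_comp, fun x y => (hB x y).trans (hφ _ _)⟩

end InducedCopies

section HubCopies

variable {ι V X : Type*} {A : V → V → Prop} {x y z : ι × Option V}

/-- Copies `(i, some a)` of `A` indexed by `ι`, together with a hub `(i, none)` for each copy that
is dominated by its own copy and dominates every other copy. -/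
def hubCopies (ι : Type*) (A : V → V → Prop) : ι × Option V → ι × Option V → Prop
  | (i, some a), (j, some b) => i = j ∧ A a b
  | (i, some _), (j, none) => i = j
  | (i, none), (j, some _) => i ≠ j
  | (_, none), (_, none) => False

@[simp] theorem hubCopies_some_some {i j : ι} {a b : V} :
    hubCopies ι A (i, some a) (j, some b) ↔ i = j ∧ A a b := Iff.rfl

@[simp] theorem hubCopies_some_none {i j : ι} {a : V} :
    hubCopies ι A (i, some a) (j, none) ↔ i = j := Iff.rfl

@[simp] theorem hubCopies_none_some {i j : ι} {b : V} :
    hubCopies ι A (i, none) (j, some b) ↔ i ≠ j := Iff.rfl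

@[simp] theorem hubCopies_none_none {i j : ι} :
    ¬ hubCopies ι A (i, none) (j, none) := id

theorem IsOrientedGraph.hubCopies (hA : IsOrientedGraph A) : IsOrientedGraph (hubCopies ι A) := by
  rintro ⟨i, _ | a⟩ ⟨j, _ | b⟩ hxy hyx
  · exact hxy
  · exact hxy hyx.symm
  · exact hyx hxy.symm
  · exact hA a b hxy.2 hyx.2

theorem IsDicoloring.hubCopies {k : ℕ} {c : V → Fin k} (hc : IsDicoloring A c) :
    IsDicoloring (hubCopies ι A) fun x => x.2.elim (Fin.last k) (Fin.castSucc ∘ c) := by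
  refine fun hcyc => hc (HasDicycle.of_disjointUnion (ι := ι) (hcyc.of_le_map
    (fun x => (x.1, some x.2)) (fun x y h => by simpa [Prod.ext_iff] using h) ?_))
  rintro ⟨i, _ | a⟩ ⟨j, _ | b⟩ ⟨hxy, hc⟩
  · exact (hubCopies_none_none hxy).elim
  · exact absurd hc (Fin.castSucc_lt_last _).ne'
  · exact absurd hc (Fin.castSucc_lt_last _).ne
  · exact ⟨(i, a), (j, b), rfl, rfl, hxy.1, hxy.2, Fin.castSucc_injective k hc⟩

theorem not_isDicoloring_hubCopies {n k : ℕ} (hA : dichromaticNumber A = k) (hk : k < n)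
    (c : Fin n × Option V → Fin k) : ¬ IsDicoloring (hubCopies (Fin n) A) c := by
  intro hc
  have hsurj : ∀ i, Surjective fun a => c (i, some a) := fun i =>
    IsDicoloring.surjective (fun hcyc => hc (hcyc.map (fun a => (i, some a))
      (fun a b h => by simpa using h) fun _ _ h => ⟨⟨rfl, h.1⟩, h.2⟩)) hA
  have hinj : Injective fun i => c (i, none) := by
    intro i j hij
    by_contra hne
    obtain ⟨a, ha⟩ := hsurj i (c (i, none))
    obtain ⟨b, hb⟩ := hsurj j (c (j, none))
    exact hc (hasDicycle_of_four (a := (i, some a)) (b := (i, none)) (c := (j, some b))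
      (d := (j, none)) ⟨rfl, ha⟩ ⟨hne, hij.trans hb.symm⟩ ⟨rfl, hb⟩
      ⟨Ne.symm hne, hij.symm.trans ha.symm⟩ (by simp [hne]))
  exact absurd (Fin.le_of_injective _ hinj) (by omega)

theorem dichromaticNumber_hubCopies [Finite V] {k : ℕ} (hA : dichromaticNumber A = k) :
    dichromaticNumber (hubCopies (Fin (k + 1)) A) = k + 1 := by
  obtain ⟨c, hc⟩ := hA ▸ exists_isDicoloring_dichromaticNumber A
  exact le_antisymm (dichromaticNumber_le hc.hubCopies)
    (lt_dichromaticNumber (not_isDicoloring_hubCopies hA k.lt_succ_self))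

theorem hubCopies_not_of_eq_none (hx : x.2 = none) (hy : y.2 = none) : ¬ hubCopies ι A x y := by
  rcases x with ⟨i, _ | a⟩ <;> rcases y with ⟨j, _ | b⟩ <;> simp_all

theorem hubCopies_or_of_eq_none (hx : x.2 = none) (hy : y.2 ≠ none) :
    hubCopies ι A x y ∨ hubCopies ι A y x := by
  rcases x with ⟨i, _ | a⟩ <;> rcases y with ⟨j, _ | b⟩ <;> simp_all [ne_or_eq, eq_comm]

theorem hubCopies.fst_eq (hx : x.2 ≠ none) (hy : y.2 ≠ none) (h : hubCopies ι A x y) :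
    x.1 = y.1 := by
  rcases x with ⟨i, _ | a⟩ <;> rcases y with ⟨j, _ | b⟩ <;> simp_all

theorem hubCopies_not_triangle_of_eq_none (hx : x.2 = none) (hxy : hubCopies ι A x y)
    (hyz : hubCopies ι A y z) (hzx : hubCopies ι A z x) : False := by
  rcases x with ⟨i, _ | a⟩ <;> rcases y with ⟨j, _ | b⟩ <;> rcases z with ⟨l, _ | d⟩ <;> simp_all

theorem hasInducedCopy_of_hubCopies {R : ι × Option V → ι × Option V → Prop} {B : X → X → Prop}
    {A' : V → V → Prop} (hR : ∀ i a b, R (i, some a) (i, some b) ↔ A' a b) {f : X → ι × Option V}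
    (hf : Injective f) (hB : ∀ x y, B x y ↔ R (f x) (f y)) (hsome : ∀ x, (f x).2 ≠ none)
    {x₀ : X} (hfst : ∀ x, (f x).1 = (f x₀).1) : HasInducedCopy A' B := by
  choose g hg using fun x => Option.ne_none_iff_exists'.mp (hsome x)
  have hfg : f = (fun a => ((f x₀).1, some a)) ∘ g := funext fun x => Prod.ext (hfst x) (hg x)
  rw [hfg] at hf hB
  exact HasInducedCopy.of_comp (hR _) hf hB

theorem hubCopies_not_hasInducedCopy_dirC3 (h : ¬ HasInducedCopy A dirC3) :
    ¬ HasInducedCopy (hubCopies ι A) dirC3 := by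
  rintro ⟨f, hf, hC⟩
  have harc : ∀ s, hubCopies ι A (f s) (f (s + 1)) := fun s =>
    (hC s (s + 1)).mp (by fin_cases s <;> rfl)
  have hsome : ∀ s, (f s).2 ≠ none := fun s hs =>
    hubCopies_not_triangle_of_eq_none hs (harc s) (harc (s + 1))
      (by simpa [add_assoc] using harc (s + 1 + 1))
  exact h (hasInducedCopy_of_hubCopies (fun _ _ _ => by simp) hf hC hsome
    (Fin.apply_eq_apply_zero_of_add_one fun s =>
      (hubCopies.fst_eq (hsome _) (hsome _) (harc s)).symm))

theorem hubCopies_not_hasInducedUCopy_pathGraph4 (h : ¬ HasInducedUCopy A pathGraph4) :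
    ¬ HasInducedUCopy (hubCopies ι A) pathGraph4 := by
  rintro ⟨f, hf, hP⟩
  have hspread : ∀ s t, ¬ pathGraph4 s t → (f s).2 = none → (f t).2 = none := fun s t hst hs =>
    by_contra fun ht => hst ((hP s t).mpr (hubCopies_or_of_eq_none hs ht))
  have hhubs : ∀ s t, pathGraph4 s t → (f s).2 = none → (f t).2 = none → False :=
    fun s t hst hs ht => ((hP s t).mp hst).elim (hubCopies_not_of_eq_none hs ht)
      (hubCopies_not_of_eq_none ht hs)
  -- a hub is adjacent to every non-hub, and the complement of `P₄` is connected,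
  -- so one hub on the path would make all four vertices hubs
  have hsome : ∀ s, (f s).2 ≠ none := by
    intro s hs
    fin_cases s
    · exact hhubs 2 3 (by decide) (hspread 0 2 (by decide) hs) (hspread 0 3 (by decide) hs)
    · exact hhubs 0 1 (by decide) (hspread 3 0 (by decide) (hspread 1 3 (by decide) hs)) hs
    · exact hhubs 2 3 (by decide) hs (hspread 0 3 (by decide) (hspread 2 0 (by decide) hs))
    · exact hhubs 0 1 (by decide) (hspread 3 0 (by decide) hs) (hspread 3 1 (by decide) hs)
  have hedge : ∀ s t, pathGraph4 s t → (f s).1 = (f t).1 := fun s t hst =>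
    ((hP s t).mp hst).elim (hubCopies.fst_eq (hsome s) (hsome t))
      fun h => (hubCopies.fst_eq (hsome t) (hsome s) h).symm
  have hfst : ∀ s, (f s).1 = (f 0).1 := by
    have h01 := hedge 0 1 (by decide)
    have h12 := hedge 1 2 (by decide)
    have h23 := hedge 2 3 (by decide)
    intro s
    fin_cases s <;> simp_all
  exact h (hasInducedCopy_of_hubCopies (R := fun x y => hubCopies ι A x y ∨ hubCopies ι A y x)
    (A' := fun a b => A a b ∨ A b a) (fun _ _ _ => by simp) hf hP hsome hfst)

end HubCopies

theorem exists_oriented_no_C3_no_P4_general (c : ℕ) :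
    ∃ (n : ℕ) (A : Fin n → Fin n → Prop), IsOrientedGraph A ∧
      dichromaticNumber A = c ∧
      ¬ HasInducedCopy A dirC3 ∧
      ¬ HasInducedUCopy A pathGraph4 := by
  induction c with
  | zero =>
    exact ⟨0, fun _ _ => False, fun _ _ h => h.elim, dichromaticNumber_of_isEmpty _,
      fun ⟨f, _⟩ => (f 0).elim0, fun ⟨f, _⟩ => (f 0).elim0⟩
  | succ k ih =>
    obtain ⟨n, A, hA, hχ, hC3, hP4⟩ := ih
    let e := (Fintype.equivFin (Fin (k + 1) × Option (Fin n))).symm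
    exact ⟨_, hubCopies (Fin (k + 1)) A on e, hA.hubCopies.onFun e,
      (dichromaticNumber_onFun_equiv e _).trans (dichromaticNumber_hubCopies hχ),
      fun h => hubCopies_not_hasInducedCopy_dirC3 hC3 (h.of_onFun e.injective),
      fun h => hubCopies_not_hasInducedUCopy_pathGraph4 hP4 (h.of_onFun e.injective)⟩

/-- For every positive integer `c` there is an oriented graph with dichromatic number
exactly `c`, no induced `→C_3`, and no induced path on 4 vertices in its underlying graph. -/
theorem exists_oriented_no_C3_no_P4 (c : ℕ) (hc : 0 < c) :
    ∃ (n : ℕ) (A : Fin n → Fin n → Prop), IsOrientedGraph A ∧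
      dichromaticNumber A = c ∧
      ¬ HasInducedCopy A dirC3 ∧
      ¬ HasInducedUCopy A pathGraph4 :=
  exists_oriented_no_C3_no_P4_general c
end

section
/- Every oriented graph whose underlying undirected graph is triangle-free and which contains no induced directed path P^+(3) (the path on 4 vertices with all three arcs oriented in the same direction) has dichromatic number at most 2; moreover there exists such an oriented graph with dichromatic number exactly 2, so the maximum dichromatic number over this class equals 2. -/
/-!
In such an oriented graph the ends of every directed walk `u → a → b → v` are adjacent: there is
no triangle, so `u ≠ v` and neither `u, b` nor `a, v` are adjacent, and there are no digons, so if
`u, v` were non-adjacent the walk would be an induced `P^+(3)`. This propagates to all walks of odd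
length: split a walk of length `2k + 5` as `u ⇝ x` (2 arcs), `x ⇝ y` (`2k + 1` arcs), `y ⇝ v`
(2 arcs); by induction `u, y` and `x, v` are adjacent, and in each orientation of these two edges
one finds a walk of length 3 or `2k + 3` from one of `u, v` to the other. Hence there is no closed
directed walk of odd length, so colouring each vertex by the parity of the length of a walk to it
from a fixed root of its strong component is well defined, and makes every arc inside a strong
component (hence some arc of every directed cycle) bichromatic. The directed 4-cycle attains the
bound.
-/

variable {V : Type*}

def HasWalk (A : V → V → Prop) : ℕ → V → V → Prop
  | 0 => Eq
  | l + 1 => fun u v => ∃ w, A u w ∧ HasWalk A l w v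

namespace HasWalk

variable {A B : V → V → Prop}

theorem zero_self (u : V) : HasWalk A 0 u u := rfl

theorem one_iff {u v : V} : HasWalk A 1 u v ↔ A u v := by
  simp [HasWalk]

theorem two_iff {u v : V} : HasWalk A 2 u v ↔ ∃ w, A u w ∧ A w v := by
  simp [HasWalk]

theorem add_iff {l m : ℕ} {u v : V} :
    HasWalk A (l + m) u v ↔ ∃ w, HasWalk A l u w ∧ HasWalk A m w v := by
  induction l generalizing u with
  | zero => simp [HasWalk]
  | succ l ih =>
    simp only [Nat.succ_add, HasWalk, ih]
    aesop

theorem append {l m : ℕ} {u w v : V} (h₁ : HasWalk A l u w) (h₂ : HasWalk A m w v) :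
    HasWalk A (l + m) u v :=
  add_iff.2 ⟨w, h₁, h₂⟩

theorem mono (hAB : ∀ x y, A x y → B x y) {l : ℕ} {u v : V} (h : HasWalk A l u v) :
    HasWalk B l u v := by
  induction l generalizing u with
  | zero => exact h
  | succ l ih =>
    obtain ⟨w, huw, hwv⟩ := h
    exact ⟨w, hAB u w huw, ih hwv⟩

end HasWalk

open Fin.NatCast in
theorem hasWalk_of_cycle {B : V → V → Prop} {n : ℕ} {f : Fin (n + 2) → V}
    (hf : ∀ i, B (f i) (f (i + 1))) (j : ℕ) (i : Fin (n + 2)) :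
    HasWalk B j (f i) (f (i + j)) := by
  induction j generalizing i with
  | zero => simp [HasWalk]
  | succ j ih =>
    refine ⟨f (i + 1), hf i, ?_⟩
    simpa only [Nat.cast_succ, add_assoc, add_comm (1 : Fin (n + 2))] using ih (i + 1)

open Fin.NatCast in
theorem HasDicycle.exists_arc_walk_back {B : V → V → Prop} (h : HasDicycle B) :
    ∃ u v, B u v ∧ ∃ m, HasWalk B m v u := by
  obtain ⟨n, f, -, hf⟩ := h
  refine ⟨f 0, f 1, by simpa using hf 0, n + 1, ?_⟩
  have hback : (1 : Fin (n + 2)) + (n + 1 : ℕ) = 0 := by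
    have h : ((1 + (n + 1) : ℕ) : Fin (n + 2)) = 0 := by
      rw [show 1 + (n + 1) = n + 2 by omega]
      exact Fin.natCast_self _
    rwa [Nat.cast_add, Nat.cast_one] at h
  simpa only [hback] using hasWalk_of_cycle hf (n + 1) 1

section OddWalks

variable {A : V → V → Prop}

theorem adj_of_walk_three (hor : IsOrientedGraph A) (htf : UTriangleFree A)
    (hP : ¬ HasInducedCopy A (dirPath 3)) {u a b v : V}
    (hua : A u a) (hab : A a b) (hbv : A b v) : A u v ∨ A v u := by
  have ne_of_arc : ∀ {x y}, A x y → x ≠ y := fun hxy hxy' => hor _ _ hxy (hxy' ▸ hxy)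
  have hua' := ne_of_arc hua
  have hab' := ne_of_arc hab
  have hbv' := ne_of_arc hbv
  have hub : u ≠ b := by rintro rfl; exact hor _ _ hua hab
  have hav : a ≠ v := by rintro rfl; exact hor _ _ hab hbv
  have huv : u ≠ v := by rintro rfl; exact htf ⟨u, a, b, .inl hua, .inl hab, .inr hbv⟩
  have hau := hor _ _ hua
  have hba := hor _ _ hab
  have hvb := hor _ _ hbv
  have hub_adj : ¬ (A u b ∨ A b u) := fun h => htf ⟨u, a, b, .inl hua, .inl hab, h⟩
  have hav_adj : ¬ (A a v ∨ A v a) := fun h => htf ⟨a, b, v, .inl hab, .inl hbv, h⟩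
  by_contra huv_adj
  refine hP ⟨![u, a, b, v], ?_, ?_⟩
  · intro i j hij
    fin_cases i <;> fin_cases j <;> simp_all
  · intro x y
    fin_cases x <;> fin_cases y <;> simp [dirPath] <;> tauto

theorem adj_of_hasWalk_odd (hor : IsOrientedGraph A) (htf : UTriangleFree A)
    (hP : ¬ HasInducedCopy A (dirPath 3)) : ∀ (k : ℕ) {u v : V},
    HasWalk A (2 * k + 1) u v → A u v ∨ A v u
  | 0, _, _, h => .inl (HasWalk.one_iff.1 h)
  | 1, _, _, ⟨_, hua, _, hab, _, hbv, rfl⟩ => adj_of_walk_three hor htf hP hua hab hbv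
  | k + 2, u, v, h => by
    obtain ⟨y, huy, hyv⟩ :=
      HasWalk.add_iff.1 (show HasWalk A (2 + (2 * k + 1) + 2) u v from by convert h using 1; ring)
    obtain ⟨x, hux, hxy⟩ := HasWalk.add_iff.1 huy
    obtain ⟨a, hua, hax⟩ := HasWalk.two_iff.1 hux
    obtain ⟨b, hyb, hbv⟩ := HasWalk.two_iff.1 hyv
    rcases adj_of_hasWalk_odd hor htf hP (k + 1) (show HasWalk A (2 * (k + 1) + 1) u y from by
      convert huy using 1; ring) with huy | hyu
    · exact adj_of_walk_three hor htf hP huy hyb hbv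
    rcases adj_of_hasWalk_odd hor htf hP (k + 1) (show HasWalk A (2 * (k + 1) + 1) x v from by
      convert hxy.append hyv using 1; ring) with hxv | hvx
    · exact adj_of_walk_three hor htf hP hua hax hxv
    have hvu : HasWalk A (2 * (k + 1) + 1) v u := by
      convert (HasWalk.one_iff.2 hvx).append (hxy.append (HasWalk.one_iff.2 hyu)) using 1; ring
    exact (adj_of_hasWalk_odd hor htf hP (k + 1) hvu).symm

theorem even_of_hasWalk_self (hor : IsOrientedGraph A) (htf : UTriangleFree A)
    (hP : ¬ HasInducedCopy A (dirPath 3)) {l : ℕ} {u : V} (h : HasWalk A l u u) : Even l := by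
  by_contra hl
  obtain ⟨k, rfl⟩ := Nat.not_even_iff_odd.1 hl
  have huu : A u u := (adj_of_hasWalk_odd hor htf hP k h).elim id id
  exact hor u u huu huu

end OddWalks

section ParityColoring

variable (A : V → V → Prop)

def strongComponentSetoid : Setoid V where
  r u v := (∃ l, HasWalk A l u v) ∧ ∃ l, HasWalk A l v u
  iseqv :=
    { refl := fun u => ⟨⟨0, HasWalk.zero_self u⟩, ⟨0, HasWalk.zero_self u⟩⟩
      symm := fun h => ⟨h.2, h.1⟩
      trans := fun ⟨⟨_, h₁⟩, ⟨_, g₁⟩⟩ ⟨⟨_, h₂⟩, ⟨_, g₂⟩⟩ =>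
        ⟨⟨_, h₁.append h₂⟩, ⟨_, g₂.append g₁⟩⟩ }

noncomputable def strongComponentRoot (v : V) : V :=
  (Quotient.mk (strongComponentSetoid A) v).out

open Classical in
noncomputable def parityColoring (v : V) : Fin 2 :=
  if ∃ l, Even l ∧ HasWalk A l (strongComponentRoot A v) v then 0 else 1

variable {A}

theorem strongComponentRoot_rel (v : V) :
    strongComponentSetoid A (strongComponentRoot A v) v :=
  Quotient.mk_out (s := strongComponentSetoid A) v

theorem strongComponentRoot_eq {u v : V} (h : strongComponentSetoid A u v) :
    strongComponentRoot A u = strongComponentRoot A v :=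
  congrArg Quotient.out (Quotient.sound h)

theorem parityColoring_eq_zero_iff (heven : ∀ l u, HasWalk A l u u → Even l) {l : ℕ} {v : V}
    (h : HasWalk A l (strongComponentRoot A v) v) : parityColoring A v = 0 ↔ Even l := by
  unfold parityColoring
  split_ifs with hex
  · obtain ⟨q, hq, hwq⟩ := hex
    obtain ⟨m, hm⟩ := (strongComponentRoot_rel v).2
    have hqm := heven _ _ (hwq.append hm)
    have hlm := heven _ _ (h.append hm)
    rw [Nat.even_add] at hqm hlm
    simp only [true_iff]
    tauto
  · simpa using fun hl => hex ⟨l, hl, h⟩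

theorem parityColoring_ne_of_arc (heven : ∀ l u, HasWalk A l u u → Even l) {u v : V}
    (huv : A u v) (hvu : ∃ m, HasWalk A m v u) : parityColoring A u ≠ parityColoring A v := by
  have hroot : strongComponentRoot A u = strongComponentRoot A v :=
    strongComponentRoot_eq ⟨⟨1, HasWalk.one_iff.2 huv⟩, hvu⟩
  obtain ⟨p, hp⟩ := (strongComponentRoot_rel u).1
  have hp' : HasWalk A (p + 1) (strongComponentRoot A v) v :=
    hroot ▸ hp.append (HasWalk.one_iff.2 huv)
  intro hc
  have := parityColoring_eq_zero_iff heven hp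
  rw [hc, parityColoring_eq_zero_iff heven hp', Nat.even_add_one] at this
  exact not_iff_self this

theorem isDicoloring_parityColoring (heven : ∀ l u, HasWalk A l u u → Even l) :
    IsDicoloring A (parityColoring A) := by
  intro hcyc
  obtain ⟨u, v, ⟨huv, hc⟩, m, hvu⟩ := hcyc.exists_arc_walk_back
  exact parityColoring_ne_of_arc heven huv ⟨m, hvu.mono fun _ _ => And.left⟩ hc

end ParityColoring

theorem dichromaticNumber_le_of_isDicoloring {A : V → V → Prop} {k : ℕ} {c : V → Fin k}
    (hc : IsDicoloring A c) : dichromaticNumber A ≤ k :=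
  Nat.sInf_le ⟨c, hc⟩

theorem dichromaticNumber_eq_two {A : V → V → Prop} (hcyc : HasDicycle A) {c : V → Fin 2}
    (hc : IsDicoloring A c) : dichromaticNumber A = 2 := by
  refine le_antisymm (dichromaticNumber_le_of_isDicoloring hc) (le_csInf ⟨2, c, hc⟩ ?_)
  rintro k ⟨c', hc'⟩
  by_contra! hk
  have : Subsingleton (Fin k) := Fin.subsingleton_iff_le_one.2 (by omega)
  have hmono : (fun x y => A x y ∧ c' x = c' y) = A := by
    funext x y
    exact propext (and_iff_left (Subsingleton.elim _ _))
  exact hc' (by rwa [hmono])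

theorem exists_isDicoloring_fin_two {A : V → V → Prop} (hor : IsOrientedGraph A)
    (htf : UTriangleFree A) (hP : ¬ HasInducedCopy A (dirPath 3)) :
    ∃ c : V → Fin 2, IsDicoloring A c :=
  ⟨_, isDicoloring_parityColoring fun _ _ => even_of_hasWalk_self hor htf hP⟩

def dirC4 : Fin 4 → Fin 4 → Prop := fun x y => y = x + 1

theorem isOrientedGraph_dirC4 : IsOrientedGraph dirC4 := by
  unfold IsOrientedGraph dirC4
  decide

theorem uTriangleFree_dirC4 : UTriangleFree dirC4 := by
  unfold UTriangleFree dirC4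
  decide

theorem not_hasInducedCopy_dirC4_dirPath_three : ¬ HasInducedCopy dirC4 (dirPath 3) := by
  rintro ⟨f, -, hf⟩
  have h₀₁ := (hf 0 1).1 rfl
  have h₁₂ := (hf 1 2).1 rfl
  have h₂₃ := (hf 2 3).1 rfl
  refine absurd ((hf 3 0).2 ?_) (by simp [dirPath])
  simp only [dirC4] at h₀₁ h₁₂ h₂₃ ⊢
  rw [h₂₃, h₁₂, h₀₁]
  generalize f 0 = x
  revert x
  decide

theorem hasDicycle_dirC4 : HasDicycle dirC4 :=
  ⟨2, id, Function.injective_id, fun _ => rfl⟩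

/-- Every oriented graph with triangle-free underlying graph and no induced `P^+(3)` has
dichromatic number at most 2, and this is attained, so the maximum over the class equals 2. -/
theorem dichromatic_trianglefree_no_P3 :
    (∀ (n : ℕ) (A : Fin n → Fin n → Prop), IsOrientedGraph A →
      UTriangleFree A → ¬ HasInducedCopy A (dirPath 3) →
      dichromaticNumber A ≤ 2) ∧
    (∃ (n : ℕ) (A : Fin n → Fin n → Prop), IsOrientedGraph A ∧
      UTriangleFree A ∧ ¬ HasInducedCopy A (dirPath 3) ∧
      dichromaticNumber A = 2) := by
  refine ⟨fun n A hor htf hP => ?_, 4, dirC4, isOrientedGraph_dirC4, uTriangleFree_dirC4,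
    not_hasInducedCopy_dirC4_dirPath_three, ?_⟩
  · obtain ⟨c, hc⟩ := exists_isDicoloring_fin_two hor htf hP
    exact dichromaticNumber_le_of_isDicoloring hc
  · obtain ⟨c, hc⟩ := exists_isDicoloring_fin_two isOrientedGraph_dirC4 uTriangleFree_dirC4
      not_hasInducedCopy_dirC4_dirPath_three
    exact dichromaticNumber_eq_two hasDicycle_dirC4 hc
end

section
/- Let D be a strongly connected oriented graph whose underlying undirected graph is triangle-free and which contains no induced directed path P^+(3). Fix a vertex x and, for each i ≥ 0, let L_i be the set of vertices at directed out-distance exactly i from x (i.e., the length of a shortest directed path from x to the vertex is i). Then every L_i is an independent set in the underlying undirected graph of D. -/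
/-- Out-distance from `x` to `v`: the least length of a directed path (walk) from `x` to `v`. -/
noncomputable def outDist {V : Type*} (A : V → V → Prop) (x v : V) : ℕ :=
  sInf {i : ℕ | ∃ f : ℕ → V, f 0 = x ∧ f i = v ∧ ∀ j, j < i → A (f j) (f (j + 1))}

/-!
Induct on the level. An arc `u → v` inside level `d + 2` gives, along a shortest path
`b → a → u` with `b, a` in levels `d, d + 1`, a directed path `b → a → u → v`; triangle-freeness
and the level structure make it induced unless `v → b`. A predecessor `a'` of `v` in level `d + 1`
is non-adjacent to `a` by induction, and then `a' → b → a → u` or `a' → v → b → a` is an induced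
`P^+(3)`.
-/

open Relation

section OutDist

variable {V : Type*} {A : V → V → Prop}

def IsDiwalk (A : V → V → Prop) (f : ℕ → V) (n : ℕ) : Prop :=
  ∀ j, j < n → A (f j) (f (j + 1))

namespace IsDiwalk

variable {f : ℕ → V} {n : ℕ}

theorem mono {m : ℕ} (hw : IsDiwalk A f n) (hmn : m ≤ n) : IsDiwalk A f m :=
  fun j hj => hw j (by omega)

theorem snoc (hw : IsDiwalk A f n) {c : V} (hc : A (f n) c) :
    IsDiwalk A (Function.update f (n + 1) c) (n + 1) := by
  intro j hj
  rcases Nat.lt_or_ge j n with hjn | hjn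
  · simpa [Function.update_of_ne (show j ≠ n + 1 by omega),
      Function.update_of_ne (show j + 1 ≠ n + 1 by omega)] using hw j hjn
  · obtain rfl : j = n := by omega
    simpa [Function.update_of_ne (show j ≠ j + 1 by omega)] using hc

theorem reflTransGen (hw : IsDiwalk A f n) : ReflTransGen A (f 0) (f n) := by
  induction n with
  | zero => exact .refl
  | succ n ih => exact .tail (ih (hw.mono n.le_succ)) (hw n n.lt_succ_self)

end IsDiwalk

theorem exists_isDiwalk_of_reflTransGen {x v : V} (h : ReflTransGen A x v) :
    ∃ n, ∃ f : ℕ → V, f 0 = x ∧ f n = v ∧ IsDiwalk A f n := by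
  induction h with
  | refl => exact ⟨0, fun _ => x, rfl, rfl, fun j hj => absurd hj (Nat.not_lt_zero j)⟩
  | tail _ hbc ih =>
    obtain ⟨n, f, h0, rfl, hw⟩ := ih
    exact ⟨n + 1, Function.update f (n + 1) _, by simp [h0], by simp, hw.snoc hbc⟩

theorem outDist_le {x : V} {f : ℕ → V} {n : ℕ} (h0 : f 0 = x) (hw : IsDiwalk A f n) :
    outDist A x (f n) ≤ n :=
  Nat.sInf_le ⟨f, h0, rfl, hw⟩

theorem exists_isDiwalk_outDist {x v : V} (h : ReflTransGen A x v) :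
    ∃ f : ℕ → V, f 0 = x ∧ f (outDist A x v) = v ∧ IsDiwalk A f (outDist A x v) :=
  Nat.sInf_mem (exists_isDiwalk_of_reflTransGen h)

theorem outDist_le_outDist_add_one {x a u : V} (ha : ReflTransGen A x a) (hau : A a u) :
    outDist A x u ≤ outDist A x a + 1 := by
  obtain ⟨f, h0, hfa, hw⟩ := exists_isDiwalk_outDist ha
  rw [← hfa] at hau
  simpa using outDist_le (by simp [h0]) (hw.snoc hau)

theorem eq_of_outDist_eq_zero {x u : V} (hu : ReflTransGen A x u) (h : outDist A x u = 0) :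
    u = x := by
  obtain ⟨f, h0, hfu, -⟩ := exists_isDiwalk_outDist hu
  rwa [h, h0, eq_comm] at hfu

theorem exists_pred_of_outDist_eq_succ {x u : V} {d : ℕ} (hu : ReflTransGen A x u)
    (h : outDist A x u = d + 1) : ∃ a, A a u ∧ outDist A x a = d := by
  obtain ⟨f, h0, hfu, hw⟩ := exists_isDiwalk_outDist hu
  rw [h] at hfu hw
  have hau : A (f d) u := hfu ▸ hw d d.lt_succ_self
  have hreach : ReflTransGen A x (f d) := h0 ▸ (hw.mono d.le_succ).reflTransGen
  have hle : outDist A x (f d) ≤ d := outDist_le h0 (hw.mono d.le_succ)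
  have hge := outDist_le_outDist_add_one hreach hau
  exact ⟨f d, hau, by omega⟩

theorem UTriangleFree.not_adj (htf : UTriangleFree A) {x y z : V} (hxy : A x y ∨ A y x)
    (hyz : A y z ∨ A z y) : ¬ (A x z ∨ A z x) :=
  fun hxz => htf ⟨x, y, z, hxy, hyz, hxz⟩

theorem IsOrientedGraph.hasInducedCopy_dirPath_three (hor : IsOrientedGraph A) {p q r s : V}
    (hpq : A p q) (hqr : A q r) (hrs : A r s) (hpr : ¬ (A p r ∨ A r p))
    (hqs : ¬ (A q s ∨ A s q)) (hps : ¬ (A p s ∨ A s p)) :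
    HasInducedCopy A (dirPath 3) := by
  have irrefl : ∀ w, ¬ A w w := fun w hw => hor w w hw hw
  have hne : ∀ {y z : V}, A y z → y ≠ z := fun h hyz => irrefl _ (hyz ▸ h)
  -- Distinctness of the four vertices comes from the arcs and non-adjacencies alone.
  have hpr' : p ≠ r := fun h => hor p q hpq (h ▸ hqr)
  have hqs' : q ≠ s := fun h => hor q r hqr (h ▸ hrs)
  have hps' : p ≠ s := fun h => hpr (Or.inr (h ▸ hrs))
  refine ⟨![p, q, r, s], ?_, ?_⟩
  · intro i j hij
    fin_cases i <;> fin_cases j <;>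
      simp_all [hne hpq, hne hqr, hne hrs, (hne hpq).symm, (hne hqr).symm, (hne hrs).symm,
        hpr'.symm, hqs'.symm, hps'.symm]
  · intro i j
    fin_cases i <;> fin_cases j <;> simp [dirPath] <;>
      grind [IsOrientedGraph]

section Levels

variable {x : V} (hor : IsOrientedGraph A) (htf : UTriangleFree A)
  (hP3 : ¬ HasInducedCopy A (dirPath 3)) (hreach : ∀ y, ReflTransGen A x y)
include hor htf hP3 hreach

theorem arc_back_of_arc_in_level {u v a b : V} {d : ℕ}
    (hv : outDist A x v = d + 2) (huv : A u v) (hau : A a u) (hba : A b a)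
    (hb : outDist A x b = d) : A v b := by
  by_contra hvb
  have hbv : ¬ A b v := fun h => by
    have := outDist_le_outDist_add_one (hreach b) h
    omega
  exact hP3 (hor.hasInducedCopy_dirPath_three hba hau huv (htf.not_adj (.inl hba) (.inl hau))
    (htf.not_adj (.inl hau) (.inl huv)) (not_or.2 ⟨hbv, hvb⟩))

theorem not_arc_of_outDist_eq (d : ℕ) :
    ∀ u v : V, outDist A x u = d → outDist A x v = d → ¬ A u v := by
  induction d using Nat.strong_induction_on with
  | _ d IH =>
  intro u v hu hv huv
  match d, hu, hv with
  | 0, hu, hv =>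
    rw [eq_of_outDist_eq_zero (hreach u) hu, eq_of_outDist_eq_zero (hreach v) hv] at huv
    exact hor x x huv huv
  | 1, hu, hv =>
    obtain ⟨x₁, hxu, hx₁⟩ := exists_pred_of_outDist_eq_succ (hreach u) hu
    obtain ⟨x₂, hxv, hx₂⟩ := exists_pred_of_outDist_eq_succ (hreach v) hv
    rw [eq_of_outDist_eq_zero (hreach x₁) hx₁] at hxu
    rw [eq_of_outDist_eq_zero (hreach x₂) hx₂] at hxv
    exact htf ⟨x, u, v, .inl hxu, .inl huv, .inl hxv⟩
  | k + 2, hu, hv =>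
    obtain ⟨a, hau, ha⟩ := exists_pred_of_outDist_eq_succ (hreach u) hu
    obtain ⟨b, hba, hb⟩ := exists_pred_of_outDist_eq_succ (hreach a) ha
    obtain ⟨a', ha'v, ha'⟩ := exists_pred_of_outDist_eq_succ (hreach v) hv
    have hvb : A v b := arc_back_of_arc_in_level hor htf hP3 hreach hv huv hau hba hb
    have ha'a : ¬ (A a' a ∨ A a a') :=
      not_or.2 ⟨IH (k + 1) (by omega) a' a ha' ha, IH (k + 1) (by omega) a a' ha ha'⟩
    have hbu : ¬ (A b u ∨ A u b) := htf.not_adj (.inl hba) (.inl hau)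
    have ha'u : ¬ (A a' u ∨ A u a') := htf.not_adj (.inl ha'v) (.inr huv)
    have hva : ¬ (A v a ∨ A a v) := htf.not_adj (.inr huv) (.inr hau)
    by_cases ha'b : A a' b
    · exact hP3 (hor.hasInducedCopy_dirPath_three ha'b hba hau ha'a hbu ha'u)
    · have hba' : ¬ A b a' := fun h => htf ⟨b, a', v, .inl h, .inl ha'v, .inr hvb⟩
      exact hP3 (hor.hasInducedCopy_dirPath_three ha'v hvb hba (not_or.2 ⟨ha'b, hba'⟩) hva ha'a)

end Levels

end OutDist

theorem levels_independent_general {V : Type*} (A : V → V → Prop)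
    (hor : IsOrientedGraph A)
    (htf : UTriangleFree A)
    (hP3 : ¬ HasInducedCopy A (dirPath 3))
    (hsc : ∀ x y : V, Relation.ReflTransGen A x y)
    (x : V) :
    ∀ u v : V, outDist A x u = outDist A x v → ¬ (A u v ∨ A v u) := by
  rintro u v h (huv | hvu)
  · exact not_arc_of_outDist_eq hor htf hP3 (hsc x) _ u v rfl h.symm huv
  · exact not_arc_of_outDist_eq hor htf hP3 (hsc x) _ v u h.symm rfl hvu

/-- In a strongly connected oriented graph with triangle-free underlying graph and no induced
`P^+(3)`, each out-distance level from a fixed vertex `x` is an independent set. -/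
theorem levels_independent {V : Type*} [Fintype V] (A : V → V → Prop)
    (hor : IsOrientedGraph A)
    (htf : UTriangleFree A)
    (hP3 : ¬ HasInducedCopy A (dirPath 3))
    (hsc : ∀ x y : V, Relation.ReflTransGen A x y)
    (x : V) :
    ∀ u v : V, outDist A x u = outDist A x v → ¬ (A u v ∨ A v u) :=
  levels_independent_general A hor htf hP3 hsc x
end
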